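/- (Per-step regret inequality under relative smoothness) Let φ_t be convex and differentiable on a convex set K, and suppose the relative smoothness property φ_t(b) ≤ φ_t(b') + ⟨∇φ_t(b'), b − b'⟩ + D_h(b, b') holds for all b, b' ∈ K. If b_t minimizes b ↦ ⟨∇φ_t(b_{t−1}), b − b_{t−1}⟩ + D_h(b, b_{t−1}) over K, then for any b* ∈ K: φ_t(b_t) − φ_t(b*) ≤ D_h(b*, b_{t−1}) − D_h(b*, b_t). -/

import Mathlib

/-! Optimality of the mirror step `b_t` against `b*` gives
`⟪∇φ(b_{t-1}), b_t - b*⟫ + D(b_t, b_{t-1}) ≤ D(b*, b_{t-1}) - D(b*, b_t)` via the three-point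
identity for Bregman divergences. Relative smoothness bounds `φ(b_t)` from above and convexity
bounds `φ(b*)` from below by the same linearisation at `b_{t-1}`, so the claim follows. -/

open Finset

abbrev E (n : ℕ) := EuclideanSpace ℝ (Fin n)

open scoped RealInnerProductSpace

variable {F : Type*} [NormedAddCommGroup F] [InnerProductSpace ℝ F]

def bregmanDiv (h : F → ℝ) (gh : F → F) (x y : F) : ℝ :=
  h x - h y - ⟪gh y, x - y⟫

theorem bregmanDiv_three_point (h : F → ℝ) (gh : F → F) (x y z : F) :
    bregmanDiv h gh z y - bregmanDiv h gh z x - bregmanDiv h gh x y = ⟪gh x - gh y, z - x⟫ := by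
  simp only [bregmanDiv, inner_sub_left, inner_sub_right]
  ring

variable [CompleteSpace F]

theorem IsMinOn.inner_gradient_nonneg {f : F → ℝ} {f' x y : F} {K : Set F} (hK : Convex ℝ K)
    (hmin : IsMinOn f K x) (hf : HasGradientAt f f' x) (hx : x ∈ K) (hy : y ∈ K) :
    0 ≤ ⟪f', y - x⟫ := by
  have := hmin.localize.hasFDerivWithinAt_nonneg
    (hasGradientAt_iff_hasFDerivAt.mp hf).hasFDerivWithinAt
    (sub_mem_posTangentConeAt_of_segment_subset (hK.segment_subset hx hy))
  simpa only [InnerProductSpace.toDual_apply_apply] using this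

theorem hasGradientAt_inner_sub_add_bregmanDiv {h : F → ℝ} {gh : F → F} {x : F}
    (hgrad : HasGradientAt h (gh x) x) (g y : F) :
    HasGradientAt (fun b => ⟪g, b - y⟫ + bregmanDiv h gh b y) (g + gh x - gh y) x := by
  have hlin : HasFDerivAt (fun b => ⟪g - gh y, b⟫) (innerSL ℝ (g - gh y)) x :=
    (innerSL ℝ (g - gh y)).hasFDerivAt
  have hsum := (hlin.add (hasGradientAt_iff_hasFDerivAt.mp hgrad)).add_const
    (⟪gh y, y⟫ - ⟪g, y⟫ - h y)
  refine hasGradientAt_iff_hasFDerivAt.mpr (hsum.congr_fderiv ?_ |>.congr_of_eventuallyEq ?_)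
  · ext v
    simp only [map_sub, map_add, add_apply, sub_apply,
      coe_innerSL_apply, InnerProductSpace.toDual_apply_apply]
    ring
  · refine Filter.Eventually.of_forall fun b => ?_
    simp only [bregmanDiv, Pi.add_apply, inner_sub_left, inner_sub_right]
    ring

theorem inner_sub_add_bregmanDiv_le_of_isMinOn {h : F → ℝ} {gh : F → F} {K : Set F}
    (hK : Convex ℝ K) (hgrad : ∀ x, HasGradientAt h (gh x) x) {g x y z : F}
    (hmin : IsMinOn (fun b => ⟪g, b - y⟫ + bregmanDiv h gh b y) K x) (hx : x ∈ K) (hz : z ∈ K) :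
    ⟪g, x - y⟫ + bregmanDiv h gh x y ≤
      ⟪g, z - y⟫ + bregmanDiv h gh z y - bregmanDiv h gh z x := by
  have hopt := hmin.inner_gradient_nonneg hK
    (hasGradientAt_inner_sub_add_bregmanDiv (hgrad x) g y) hx hz
  have hthree := bregmanDiv_three_point h gh x y z
  simp only [inner_add_left, inner_sub_left, inner_sub_right] at hopt hthree ⊢
  linarith

/-- Per-step regret inequality under relative smoothness. -/
theorem stmt_7 (n : ℕ) (K : Set (E n)) (hK : Convex ℝ K)
    (h : E n → ℝ) (gh : E n → E n) (hgrad : ∀ x, HasGradientAt h (gh x) x)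
    (D : E n → E n → ℝ) (hD : ∀ x y, D x y = h x - h y - (inner ℝ (gh y) (x - y) : ℝ))
    (φ : E n → ℝ) (gφ : E n → E n)
    (hφconv : ∀ b ∈ K, ∀ b' ∈ K, φ b' + (inner ℝ (gφ b') (b - b') : ℝ) ≤ φ b)
    (hrel : ∀ b ∈ K, ∀ b' ∈ K, φ b ≤ φ b' + (inner ℝ (gφ b') (b - b') : ℝ) + D b b')
    (bprev bt bstar : E n) (hbprev : bprev ∈ K) (hbt : bt ∈ K) (hbstar : bstar ∈ K)
    (hmin : ∀ b ∈ K, (inner ℝ (gφ bprev) (bt - bprev) : ℝ) + D bt bprev ≤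
      (inner ℝ (gφ bprev) (b - bprev) : ℝ) + D b bprev) :
    φ bt - φ bstar ≤ D bstar bprev - D bstar bt := by
  obtain rfl : D = bregmanDiv h gh := funext₂ hD
  have hstep := inner_sub_add_bregmanDiv_le_of_isMinOn hK hgrad hmin hbt hbstar
  linarith [hrel bt hbt bprev hbprev, hφconv bstar hbstar bprev hbprev]
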